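/- Let V₀>3, T=2π, a=0, b=2, c=1/10, and define e:[0,2π]→ℝ by e(t) = (1/10)V₀ + 9/5 + (21/10 − V₀)cos t − 3cos²t. Then the function u(t) = (V₀−2) + cos t satisfies u(t)>0 for all t∈[0,2π], u''(t) + a u'(t) = (1/u(t))·(e(t) − b·(u'(t))²) − c for all t∈[0,2π], u(0)=u(2π), and u'(0)=u'(2π). Moreover, the mean value (1/(2π))∫₀^{2π} e(s) ds is positive while min{e(t): t∈[0,2π]} < 0. -/

import Mathlib

open Set Real

noncomputable def pd1 (T : ℝ) (x : ℝ → ℝ) : ℝ → ℝ := derivWithin x (Set.Icc 0 T)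

noncomputable def pd2 (T : ℝ) (x : ℝ → ℝ) : ℝ → ℝ := derivWithin (pd1 T x) (Set.Icc 0 T)

/-- The external force `e(t) = 0.1 V₀ + 1.8 + (2.1 − V₀) cos t − 3 cos² t`. -/
noncomputable def e17 (V₀ t : ℝ) : ℝ :=
  V₀ / 10 + 9 / 5 + (21 / 10 - V₀) * Real.cos t - 3 * (Real.cos t) ^ 2

/-- The candidate solution `u(t) = (V₀ − 2) + cos t`. -/
noncomputable def u17 (V₀ t : ℝ) : ℝ := (V₀ - 2) + Real.cos t

/-! We have `u' = -sin t` and `u'' = -cos t`, and `e - 2 sin² t` factors as `u (1/10 - cos t)`,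
so the right-hand side of the equation is `(1/10 - cos t) - 1/10 = u''`. Since `∫ cos = 0` and
`∫ cos² = π` over a period, the mean of `e` is `(V₀ + 3)/10 > 0`, while `e 0 = 9 (1 - V₀)/10 < 0`. -/

section OneSidedDerivatives

variable {T : ℝ} {x : ℝ → ℝ}

theorem pd1_eq_of_hasDerivAt (hT : 0 < T) {t x' : ℝ} (ht : t ∈ Icc 0 T)
    (hx : HasDerivAt x x' t) : pd1 T x t = x' :=
  hx.hasDerivWithinAt.derivWithin (uniqueDiffOn_Icc hT t ht)

theorem pd2_eq_of_hasDerivAt (hT : 0 < T) {x' : ℝ → ℝ} {t x'' : ℝ} (ht : t ∈ Icc 0 T)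
    (hx : ∀ s ∈ Icc 0 T, HasDerivAt x (x' s) s) (hx' : HasDerivAt x' x'' t) :
    pd2 T x t = x'' := by
  have hpd1 : EqOn (pd1 T x) x' (Icc 0 T) := fun s hs => pd1_eq_of_hasDerivAt hT hs (hx s hs)
  rw [pd2, derivWithin_congr hpd1 (hpd1 ht)]
  exact hx'.hasDerivWithinAt.derivWithin (uniqueDiffOn_Icc hT t ht)

end OneSidedDerivatives

theorem hasDerivAt_u17 (V₀ t : ℝ) : HasDerivAt (u17 V₀) (-sin t) t :=
  (hasDerivAt_cos t).const_add (V₀ - 2)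

theorem pd1_u17 {T V₀ t : ℝ} (hT : 0 < T) (ht : t ∈ Icc 0 T) :
    pd1 T (u17 V₀) t = -sin t :=
  pd1_eq_of_hasDerivAt hT ht (hasDerivAt_u17 V₀ t)

theorem pd2_u17 {T V₀ t : ℝ} (hT : 0 < T) (ht : t ∈ Icc 0 T) :
    pd2 T (u17 V₀) t = -cos t :=
  pd2_eq_of_hasDerivAt hT ht (fun s _ => hasDerivAt_u17 V₀ s) (hasDerivAt_sin t).neg

theorem u17_pos {V₀ : ℝ} (hV₀ : 3 < V₀) (t : ℝ) : 0 < u17 V₀ t := by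
  have := neg_one_le_cos t
  unfold u17
  linarith

theorem e17_sub_two_mul_sin_sq (V₀ t : ℝ) :
    e17 V₀ t - 2 * sin t ^ 2 = u17 V₀ t * (1 / 10 - cos t) := by
  rw [sin_sq, e17, u17]
  ring

theorem integral_e17 (V₀ : ℝ) :
    ∫ t in (0 : ℝ)..(2 * π), e17 V₀ t = 2 * π * ((V₀ + 3) / 10) := by
  have hcos : ∫ t in (0 : ℝ)..(2 * π), cos t = 0 := by simp
  have hcos_sq : ∫ t in (0 : ℝ)..(2 * π), cos t ^ 2 = π := by simp [integral_cos_sq]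
  have hint : ∀ f : ℝ → ℝ, Continuous f → IntervalIntegrable f MeasureTheory.volume 0 (2 * π) :=
    fun f hf => hf.intervalIntegrable _ _
  unfold e17
  rw [intervalIntegral.integral_sub (hint _ (by fun_prop)) (hint _ (by fun_prop)),
    intervalIntegral.integral_add (hint _ (by fun_prop)) (hint _ (by fun_prop)),
    intervalIntegral.integral_const_mul, intervalIntegral.integral_const_mul,
    intervalIntegral.integral_const, hcos, hcos_sq, smul_eq_mul]
  ring

theorem e17_zero (V₀ : ℝ) : e17 V₀ 0 = 9 * (1 - V₀) / 10 := by
  rw [e17, cos_zero]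
  ring

theorem sInf_image_Icc_le {f : ℝ → ℝ} {a b t : ℝ} (hf : ContinuousOn f (Icc a b))
    (ht : t ∈ Icc a b) : sInf (f '' Icc a b) ≤ f t :=
  csInf_le (isCompact_Icc.image_of_continuousOn hf).bddBelow (mem_image_of_mem f ht)

theorem statement17 (V₀ : ℝ) (hV₀ : 3 < V₀) :
    (∀ t ∈ Set.Icc 0 (2 * Real.pi), 0 < u17 V₀ t) ∧
    (∀ t ∈ Set.Icc 0 (2 * Real.pi),
      pd2 (2 * Real.pi) (u17 V₀) t + 0 * pd1 (2 * Real.pi) (u17 V₀) t =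
        (1 / u17 V₀ t) * (e17 V₀ t - 2 * (pd1 (2 * Real.pi) (u17 V₀) t) ^ 2) - 1 / 10) ∧
    u17 V₀ 0 = u17 V₀ (2 * Real.pi) ∧
    pd1 (2 * Real.pi) (u17 V₀) 0 = pd1 (2 * Real.pi) (u17 V₀) (2 * Real.pi) ∧
    0 < (1 / (2 * Real.pi)) * ∫ u in (0:ℝ)..(2 * Real.pi), e17 V₀ u ∧
    sInf (e17 V₀ '' Set.Icc 0 (2 * Real.pi)) < 0 := by
  have hT : 0 < 2 * π := by positivity
  have h0 : (0 : ℝ) ∈ Icc 0 (2 * π) := left_mem_Icc.2 hT.le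
  have hT_mem : 2 * π ∈ Icc 0 (2 * π) := right_mem_Icc.2 hT.le
  have hu : ∀ t, 0 < u17 V₀ t := u17_pos hV₀
  refine ⟨fun t _ => hu t, fun t ht => ?_, by simp [u17], ?_, ?_, ?_⟩
  · rw [pd1_u17 hT ht, pd2_u17 hT ht, neg_sq, e17_sub_two_mul_sin_sq, one_div,
      inv_mul_cancel_left₀ (hu t).ne']
    ring
  · simp [pd1_u17 hT h0, pd1_u17 hT hT_mem]
  · rw [integral_e17]
    have : 0 < (V₀ + 3) / 10 := by linarith
    positivity
  · have he : ContinuousOn (e17 V₀) (Icc 0 (2 * π)) := by unfold e17; fun_prop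
    calc sInf (e17 V₀ '' Icc 0 (2 * π)) ≤ e17 V₀ 0 := sInf_image_Icc_le he h0
      _ < 0 := by rw [e17_zero]; linarith
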